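/- arXiv:2604.06686 — 2 statements merged into one kernel-verified Lean document; each statement's English description precedes it below -/
import Mathlib

section
/- Let G be a group with finite symmetric generating set S, let H ≤ G be a subgroup, and let A ⊆ G be a subset. Then the following are equivalent: (1) the boundary ∂A = {x ∈ G : x ∉ A and xs ∈ A for some s ∈ S} is contained in finitely many left H-cosets (i.e., H-finite); (2) for every g ∈ G, the set A ∩ (Aᶜ)g = {x : x ∈ A and xg⁻¹ ∉ A} is H-finite. -/
open SimpleGraph

variable {G : Type*} [Group G]

/-- The Cayley graph of `G` with respect to a (symmetric) generating set `S`. -/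
def Cay (S : Finset G) : SimpleGraph G :=
  SimpleGraph.fromRel (fun x y => x⁻¹ * y ∈ S)

/-- A subset `B ⊆ G` is `H`-finite if it is contained in finitely many right cosets
`Hg` (i.e. finitely many orbits of the left multiplication action of `H`). -/
def HFin (H : Subgroup G) (B : Set G) : Prop :=
  ((fun g => Quotient.mk (QuotientGroup.rightRel H) g) '' B).Finite

/-!
Write `E g = A ∩ Aᶜg` (`interComplMul A g`). Then `E (g * h) ⊆ E h ∪ E g * h`, and
`H`-finiteness is preserved by right translations and finite unions, so the `g` with `E g`
`H`-finite form a submonoid; for a symmetric generating set it is all of `G` as soon as it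
contains `S`. On the other hand `∂A` is
the union over `s ∈ S` of the translates `E s * s⁻¹`.
-/

namespace HFin

variable {H : Subgroup G}

lemma mono {B C : Set G} (h : B ⊆ C) (hC : HFin H C) : HFin H B :=
  hC.subset (Set.image_mono h)

lemma empty (H : Subgroup G) : HFin H (∅ : Set G) := by
  simp [HFin]

lemma union {B C : Set G} (hB : HFin H B) (hC : HFin H C) : HFin H (B ∪ C) := by
  unfold HFin at *
  rw [Set.image_union]
  exact hB.union hC

lemma biUnion {ι : Type*} {I : Set ι} (hI : I.Finite) {B : ι → Set G}
    (hB : ∀ i ∈ I, HFin H (B i)) : HFin H (⋃ i ∈ I, B i) := by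
  unfold HFin at *
  rw [Set.image_iUnion₂]
  exact hI.biUnion hB

lemma image_mul_right {B : Set G} (hB : HFin H B) (g : G) : HFin H ((· * g) '' B) := by
  have compat : ∀ a b, QuotientGroup.rightRel H a b →
      QuotientGroup.rightRel H (a * g) (b * g) := by
    intro a b hab
    rw [QuotientGroup.rightRel_apply] at *
    simpa [mul_assoc] using hab
  unfold HFin at *
  convert hB.image (Quotient.map (· * g) compat) using 1
  simp only [Set.image_image, Quotient.map_mk]

lemma image_mul_right_iff {B : Set G} (g : G) : HFin H ((· * g) '' B) ↔ HFin H B := by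
  refine ⟨fun h => ?_, fun h => h.image_mul_right g⟩
  simpa only [Set.image_image, mul_inv_cancel_right, Set.image_id'] using h.image_mul_right g⁻¹

end HFin

def interComplMul (A : Set G) (g : G) : Set G :=
  {x | x ∈ A ∧ x * g⁻¹ ∉ A}

lemma interComplMul_one (A : Set G) : interComplMul A 1 = ∅ := by
  ext x
  simp [interComplMul]

lemma interComplMul_mul_subset (A : Set G) (g h : G) :
    interComplMul A (g * h) ⊆ interComplMul A h ∪ (· * h) '' interComplMul A g := by
  rintro x ⟨hxA, hx⟩
  by_cases hxh : x * h⁻¹ ∈ A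
  · exact Or.inr ⟨x * h⁻¹, ⟨hxh, by simpa [mul_assoc] using hx⟩, by simp⟩
  · exact Or.inl ⟨hxA, hxh⟩

lemma interComplMul_eq_image_mul_right (A : Set G) (g : G) :
    interComplMul A g = (· * g) '' {y | y ∉ A ∧ y * g ∈ A} := by
  ext x
  simp [interComplMul, Set.image_mul_right, and_comm]

def hFinShifts (H : Subgroup G) (A : Set G) : Submonoid G where
  carrier := {g | HFin H (interComplMul A g)}
  one_mem' := by
    simpa [interComplMul_one] using HFin.empty H
  mul_mem' {g h} hg hh :=
    (HFin.union hh (hg.image_mul_right h)).mono (interComplMul_mul_subset A g h)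

lemma hFinShifts_eq_top {S : Set G} (hsym : ∀ s ∈ S, s⁻¹ ∈ S)
    (hgen : Subgroup.closure S = ⊤) {H : Subgroup G} {A : Set G}
    (hS : ∀ s ∈ S, HFin H (interComplMul A s)) : hFinShifts H A = ⊤ := by
  have hS_inv : S⁻¹ ⊆ S := fun s hs => by simpa using hsym s⁻¹ hs
  rw [eq_top_iff, ← Subgroup.top_toSubmonoid, ← hgen, Subgroup.closure_toSubmonoid,
    Set.union_eq_self_of_subset_right hS_inv, Submonoid.closure_le]
  exact hS

lemma boundary_eq_biUnion (S : Set G) (A : Set G) :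
    {x | x ∉ A ∧ ∃ s ∈ S, x * s ∈ A} = ⋃ s ∈ S, (· * s⁻¹) '' interComplMul A s := by
  ext x
  simp only [Set.mem_ofPred_eq, Set.mem_iUnion, interComplMul_eq_image_mul_right,
    Set.image_image, mul_inv_cancel_right, Set.image_id', exists_prop]
  tauto

lemma hFin_boundary_iff {S : Set G} (hS : S.Finite) (H : Subgroup G) (A : Set G) :
    HFin H {x | x ∉ A ∧ ∃ s ∈ S, x * s ∈ A} ↔ ∀ s ∈ S, HFin H (interComplMul A s) := by
  rw [boundary_eq_biUnion]
  refine ⟨fun h s hs => ?_, fun h => HFin.biUnion hS fun s hs => (h s hs).image_mul_right _⟩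
  refine (HFin.image_mul_right_iff s⁻¹).mp (h.mono ?_)
  exact Set.subset_biUnion_of_mem (u := fun s => (· * s⁻¹) '' interComplMul A s) hs

/-- The boundary `∂A = {x ∉ A : ∃ s ∈ S, xs ∈ A}` is `H`-finite if and only if
`A ∩ Aᶜg` is `H`-finite for every `g ∈ G`. -/
theorem stmt1 (S : Finset G) (hsym : ∀ s ∈ S, s⁻¹ ∈ S)
    (hgen : Subgroup.closure (S : Set G) = ⊤)
    (H : Subgroup G) (A : Set G) :
    HFin H {x : G | x ∉ A ∧ ∃ s ∈ S, x * s ∈ A} ↔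
      ∀ g : G, HFin H {x : G | x ∈ A ∧ x * g⁻¹ ∉ A} := by
  have hboundary := hFin_boundary_iff S.finite_toSet H A
  simp only [Finset.mem_coe] at hboundary
  rw [hboundary]
  refine ⟨fun hS g => ?_, fun h s _ => h s⟩
  have hg : g ∈ hFinShifts H A := hFinShifts_eq_top hsym hgen hS ▸ Submonoid.mem_top g
  exact hg
end

section
/- In a median graph X, any connected, median-closed subgraph Y is isometrically embedded in X (and is hence itself a median graph). -/
open SimpleGraph

variable {V : Type*}

/-- Triangle condition of weak modularity. -/
def TriangleCond (X : SimpleGraph V) : Prop :=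
  ∀ o x y : V, X.Adj x y → X.dist o x = X.dist o y →
    ∃ w : V, X.Adj w x ∧ X.Adj w y ∧ X.dist o w + 1 = X.dist o x

/-- Quadrangle condition of weak modularity. -/
def QuadCond (X : SimpleGraph V) : Prop :=
  ∀ o x y z : V, X.Adj z x → X.Adj z y → X.dist x y = 2 →
    X.dist o z = X.dist o x + 1 → X.dist o z = X.dist o y + 1 →
    ∃ w : V, X.Adj w x ∧ X.Adj w y ∧ X.dist o w + 2 = X.dist o z

/-- No induced copy of the complete bipartite graph `K_{2,3}`. -/
def NoInducedK23 (X : SimpleGraph V) : Prop :=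
  ¬ ∃ a b x y z : V, a ≠ b ∧ x ≠ y ∧ y ≠ z ∧ x ≠ z ∧
    X.Adj a x ∧ X.Adj a y ∧ X.Adj a z ∧ X.Adj b x ∧ X.Adj b y ∧ X.Adj b z ∧
    ¬ X.Adj a b ∧ ¬ X.Adj x y ∧ ¬ X.Adj y z ∧ ¬ X.Adj x z

/-- No induced copy of `K₄` minus an edge. -/
def NoInducedK4minus (X : SimpleGraph V) : Prop :=
  ¬ ∃ a b c d : V, X.Adj a b ∧ X.Adj a c ∧ X.Adj a d ∧ X.Adj b c ∧ X.Adj b d ∧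
    c ≠ d ∧ ¬ X.Adj c d

/-- A quasi-median graph: a connected weakly modular graph with no induced
`K_{2,3}` and no induced `K₄⁻`. -/
def QuasiMedian (X : SimpleGraph V) : Prop :=
  X.Connected ∧ TriangleCond X ∧ QuadCond X ∧ NoInducedK23 X ∧ NoInducedK4minus X

/-- `m` lies on a geodesic from `a` to `b`. -/
def InInterval (X : SimpleGraph V) (a m b : V) : Prop :=
  X.dist a m + X.dist m b = X.dist a b

/-- `m` is a median of the triple `a, b, c`. -/
def IsMedianOf (X : SimpleGraph V) (m a b c : V) : Prop :=
  InInterval X a m b ∧ InInterval X b m c ∧ InInterval X a m c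

/-- A median graph: connected, and every triple of vertices has a unique median. -/
def MedianGraph (X : SimpleGraph V) : Prop :=
  X.Connected ∧ ∀ a b c : V, ∃! m : V, IsMedianOf X m a b c

/-- The elementary relation on edges generating hyperplanes: two edges of a common
triangle, or opposite edges of an induced 4-cycle. -/
def EdgeRel (X : SimpleGraph V) (e f : Sym2 V) : Prop :=
  (∃ a b c : V, X.Adj a b ∧ X.Adj b c ∧ X.Adj a c ∧ e = s(a, b) ∧ f = s(b, c)) ∨
  (∃ a b c d : V, X.Adj a b ∧ X.Adj b c ∧ X.Adj c d ∧ X.Adj d a ∧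
    a ≠ c ∧ ¬ X.Adj a c ∧ b ≠ d ∧ ¬ X.Adj b d ∧ e = s(a, b) ∧ f = s(c, d))

/-- A hyperplane: an equivalence class of edges under the reflexive-transitive
closure of `EdgeRel`. -/
def IsHyperplane (X : SimpleGraph V) (J : Set (Sym2 V)) : Prop :=
  ∃ e ∈ X.edgeSet, J = {f | Relation.ReflTransGen (EdgeRel X) e f}

/-- The hyperplane `J` separates `x` and `y`. -/
def SeparatesPts (X : SimpleGraph V) (J : Set (Sym2 V)) (x y : V) : Prop :=
  ¬ (X.deleteEdges J).Reachable x y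

/-- A sector delimited by `J`: a connected component of `X` minus the edges of `J`. -/
def IsSectorOf (X : SimpleGraph V) (J : Set (Sym2 V)) (S : Set V) : Prop :=
  ∃ v : V, S = {w | (X.deleteEdges J).Reachable v w}

/-- A gated subset of vertices. -/
def IsGated (X : SimpleGraph V) (Y : Set V) : Prop :=
  Y.Nonempty ∧ ∀ x : V, ∃ y ∈ Y, ∀ z ∈ Y, X.dist x z = X.dist x y + X.dist y z

/-- The gated hull of a set of vertices. -/
def GatedHull (X : SimpleGraph V) (A : Set V) : Set V :=
  ⋂₀ {Y : Set V | IsGated X Y ∧ A ⊆ Y}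

/-- A polytope: the gated hull of a non-empty finite set of vertices. -/
def IsPolytope (X : SimpleGraph V) (P : Set V) : Prop :=
  ∃ A : Finset V, A.Nonempty ∧ P = GatedHull X (A : Set V)

/-- `HypOf X Y`: the hyperplanes separating two vertices of `Y` (the hyperplanes
crossing `Y`). -/
def HypOf (X : SimpleGraph V) (Y : Set V) : Set (Set (Sym2 V)) :=
  {J | IsHyperplane X J ∧ ∃ a ∈ Y, ∃ b ∈ Y, SeparatesPts X J a b}

/-- The hyperplanes separating `A` from `B` (placing them in two distinct sectors). -/
def SepHyp (X : SimpleGraph V) (A B : Set V) : Set (Set (Sym2 V)) :=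
  {J | IsHyperplane X J ∧ ∃ S T : Set V, IsSectorOf X J S ∧ IsSectorOf X J T ∧
    S ≠ T ∧ A ⊆ S ∧ B ⊆ T}

/-- The covering relation for polytopes: `P ⊊ Q` with no polytope strictly between. -/
def PolyCover (X : SimpleGraph V) (P Q : Set V) : Prop :=
  IsPolytope X P ∧ IsPolytope X Q ∧ P ⊂ Q ∧
    ¬ ∃ R : Set V, IsPolytope X R ∧ P ⊂ R ∧ R ⊂ Q

abbrev PolyVert (X : SimpleGraph V) := {P : Set V // IsPolytope X P}

/-- The graph of polytopes: the covering graph of the inclusion poset of polytopes. -/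
def PolyGraph (X : SimpleGraph V) : SimpleGraph (PolyVert X) where
  Adj P Q := PolyCover X P.val Q.val ∨ PolyCover X Q.val P.val
  symm := by constructor; intro P Q h; exact h.symm
  loopless := by constructor; intro P h; rcases h with h | h <;> exact (ssubset_irrefl P.val) h.2.2.1

/-- Two hyperplanes are transverse: there is an induced 4-cycle whose two pairs of
opposite edges belong respectively to the two hyperplanes. -/
def Transverse (X : SimpleGraph V) (J₁ J₂ : Set (Sym2 V)) : Prop :=
  ∃ a b c d : V, X.Adj a b ∧ X.Adj b c ∧ X.Adj c d ∧ X.Adj d a ∧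
    a ≠ c ∧ ¬ X.Adj a c ∧ b ≠ d ∧ ¬ X.Adj b d ∧
    s(a, b) ∈ J₁ ∧ s(c, d) ∈ J₁ ∧ s(b, c) ∈ J₂ ∧ s(d, a) ∈ J₂

/-- A prism: a polytope whose crossing hyperplanes are pairwise transverse (this
characterises the gated subgraphs decomposing as finite products of cliques). -/
def IsPrism (X : SimpleGraph V) (P : Set V) : Prop :=
  IsPolytope X P ∧ ∀ J₁ ∈ HypOf X P, ∀ J₂ ∈ HypOf X P, J₁ ≠ J₂ → Transverse X J₁ J₂

/-- The covering relation for prisms. -/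
def PrismCover (X : SimpleGraph V) (P Q : Set V) : Prop :=
  IsPrism X P ∧ IsPrism X Q ∧ P ⊂ Q ∧
    ¬ ∃ R : Set V, IsPrism X R ∧ P ⊂ R ∧ R ⊂ Q

abbrev PrismVert (X : SimpleGraph V) := {P : Set V // IsPrism X P}

/-- The graph of prisms. -/
def PrismGraph (X : SimpleGraph V) : SimpleGraph (PrismVert X) where
  Adj P Q := PrismCover X P.val Q.val ∨ PrismCover X Q.val P.val
  symm := by constructor; intro P Q h; exact h.symm
  loopless := by constructor; intro P h; rcases h with h | h <;> exact (ssubset_irrefl P.val) h.2.2.1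

/-- A convex set of vertices: closed under taking points on geodesics. -/
def IsConvexSet (X : SimpleGraph V) (Y : Set V) : Prop :=
  ∀ a ∈ Y, ∀ b ∈ Y, ∀ m : V, InInterval X a m b → m ∈ Y

/-- The convex hull of a set of vertices. -/
def ConvHull (X : SimpleGraph V) (A : Set V) : Set V :=
  ⋂₀ {Y : Set V | IsConvexSet X Y ∧ A ⊆ Y}

/-- The subgraph of `X` induced on `Y` (kept on the same vertex set). -/
def RestrictTo (X : SimpleGraph V) (Y : Set V) : SimpleGraph V where
  Adj a b := X.Adj a b ∧ a ∈ Y ∧ b ∈ Y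
  symm := by constructor; intro a b h; exact ⟨h.1.symm, h.2.2, h.2.1⟩
  loopless := by constructor; intro a h; exact X.loopless.irrefl a h.1

/-! From any `a ≠ b` in a median-closed `Y`, some neighbour of `a` in `Y` lies on an
`X`-geodesic from `a` to `b`: the median of `a`, `b` and the first vertex `c'` of a `Y`-path
from `a` to `b` such that `a` is not between `c'` and `b`. Repeating this builds a path in `Y`
of length `X.dist a b`, so `Y` is isometric; medians of `Y` are then those of `X`, which lie
in `Y`. -/

lemma SimpleGraph.Reachable.dist_map_le {W : Type*} {G : SimpleGraph V} {H : SimpleGraph W}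
    (f : G →g H) {u v : V} (h : G.Reachable u v) : H.dist (f u) (f v) ≤ G.dist u v := by
  obtain ⟨p, hp⟩ := h.exists_walk_length_eq_dist
  calc H.dist (f u) (f v) ≤ (p.map f).length := dist_le _
    _ = G.dist u v := by rw [Walk.length_map, hp]

def IsMedianClosed (X : SimpleGraph V) (Y : Set V) : Prop :=
  ∀ a ∈ Y, ∀ b ∈ Y, ∀ c ∈ Y, ∀ m : V, IsMedianOf X m a b c → m ∈ Y

section MedianGraph

variable {X : SimpleGraph V}

/-- Adding the interval identities of `m` gives `2 d(a, m) = d(a, c') + d(a, d) - d(c', d) ≤ 2`,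
and `m ≠ a` because `a` is not between `c'` and `d`. -/
lemma adj_of_isMedianOf_of_not_inInterval (hXc : X.Connected) {a c c' d m : V}
    (hcc' : X.Adj c c') (hc : InInterval X c a d) (hc' : ¬ InInterval X c' a d)
    (hm : IsMedianOf X m a c' d) : X.Adj a m := by
  obtain ⟨hm₁, hm₂, hm₃⟩ := hm
  unfold InInterval at hc hc' hm₁ hm₂ hm₃
  have hma : m ≠ a := by
    rintro rfl
    exact hc' hm₂
  have hcc'_dist : X.dist c c' = 1 := dist_eq_one_iff_adj.mpr hcc'
  have h_ac' : X.dist a c' ≤ X.dist a c + X.dist c c' := hXc.dist_triangle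
  have h_cd : X.dist c d ≤ X.dist c c' + X.dist c' d := hXc.dist_triangle
  have h_am_pos : 0 < X.dist a m := hXc.pos_dist_of_ne hma.symm
  rw [dist_comm (u := c)] at hc
  rw [dist_comm (u := m)] at hm₁
  rw [dist_comm (u := c')] at hc'
  exact dist_eq_one_iff_adj.mp (by omega)

variable {Y : Set V}

lemma exists_adj_inInterval_of_walk (hX : MedianGraph X) (hY : IsMedianClosed X Y)
    {a : V} (ha : a ∈ Y) {c d : Y} (w : (X.induce Y).Walk c d) (had : a ≠ d)
    (hc : InInterval X c a d) : ∃ m ∈ Y, X.Adj a m ∧ InInterval X a m d := by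
  induction w with
  | nil =>
    unfold InInterval at hc
    rw [dist_self] at hc
    exact absurd ((hX.1 _ _).dist_eq_zero_iff.mp (by omega)) had
  | @cons c c' d hcc' w ih =>
    by_cases hc' : InInterval X c' a d
    · exact ih had hc'
    obtain ⟨m, hm, -⟩ := hX.2 a c' d
    exact ⟨m, hY a ha c' c'.2 d d.2 m hm,
      adj_of_isMedianOf_of_not_inInterval hX.1 hcc' hc hc' hm, hm.2.2⟩

lemma dist_induce_le (hX : MedianGraph X) (hY : IsMedianClosed X Y)
    (hconn : (X.induce Y).Connected) (a b : Y) : (X.induce Y).dist a b ≤ X.dist a b := by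
  induction h : X.dist a b using Nat.strong_induction_on generalizing a with
  | _ n ih =>
    by_cases hab : a = b
    · simp [hab]
    obtain ⟨m, hmY, ham, hmb⟩ := exists_adj_inInterval_of_walk hX hY a.2
      (hconn a b).some (Subtype.coe_ne_coe.mpr hab) (by simp [InInterval])
    have ham_dist : X.dist a m = 1 := dist_eq_one_iff_adj.mpr ham
    unfold InInterval at hmb
    have ih_m := ih (n - 1) (by omega) ⟨m, hmY⟩ (by simp only; omega)
    have ham_induce : (X.induce Y).dist a ⟨m, hmY⟩ = 1 := dist_eq_one_iff_adj.mpr ham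
    have := hconn.dist_triangle (u := a) (v := ⟨m, hmY⟩) (w := b)
    omega

lemma dist_induce_eq (hX : MedianGraph X) (hY : IsMedianClosed X Y)
    (hconn : (X.induce Y).Connected) (a b : Y) : (X.induce Y).dist a b = X.dist a b :=
  le_antisymm (dist_induce_le hX hY hconn a b)
    ((hconn a b).dist_map_le (Embedding.induce Y).toHom)

lemma isMedianOf_induce_iff (hdist : ∀ a b : Y, (X.induce Y).dist a b = X.dist a b)
    (m a b c : Y) : IsMedianOf (X.induce Y) m a b c ↔ IsMedianOf X m a b c := by
  simp only [IsMedianOf, InInterval, hdist]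

lemma medianGraph_induce (hX : MedianGraph X) (hY : IsMedianClosed X Y)
    (hconn : (X.induce Y).Connected) : MedianGraph (X.induce Y) := by
  refine ⟨hconn, fun a b c => ?_⟩
  obtain ⟨m, hm, hm_unique⟩ := hX.2 a b c
  simp only [isMedianOf_induce_iff (dist_induce_eq hX hY hconn)]
  exact ⟨⟨m, hY a a.2 b b.2 c c.2 m hm⟩, hm, fun m' hm' => Subtype.ext (hm_unique m' hm')⟩

end MedianGraph

theorem stmt3_general (X : SimpleGraph V) (hX : MedianGraph X) (Y : Set V)
    (hconn : (X.induce Y).Connected)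
    (hmed : ∀ a ∈ Y, ∀ b ∈ Y, ∀ c ∈ Y, ∀ m : V, IsMedianOf X m a b c → m ∈ Y) :
    (∀ a b : Y, (X.induce Y).dist a b = X.dist a.val b.val) ∧
      MedianGraph (X.induce Y) :=
  ⟨dist_induce_eq hX hmed hconn, medianGraph_induce hX hmed hconn⟩

/-- In a median graph, any connected median-closed subgraph is isometrically
embedded, and is hence itself a median graph. -/
theorem stmt3 (X : SimpleGraph V) (hX : MedianGraph X) (Y : Set V)
    (hne : Y.Nonempty)
    (hconn : (X.induce Y).Connected)
    (hmed : ∀ a ∈ Y, ∀ b ∈ Y, ∀ c ∈ Y, ∀ m : V, IsMedianOf X m a b c → m ∈ Y) :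
    (∀ a b : Y, (X.induce Y).dist a b = X.dist a.val b.val) ∧
      MedianGraph (X.induce Y) :=
  stmt3_general X hX Y hconn hmed
end
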